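/- arXiv:1412.8481 — 4 statements merged into one kernel-verified Lean document; each statement's English description precedes it below -/
import Mathlib

section
/- Let p ∈ (0, ∞) and let (Ω, μ) be a measure space. Every two-valued Schauder basis of L_p(Ω, μ) has strict p-negative type when viewed as a metric subspace of L_p(Ω, μ). -/
open MeasureTheory ENNReal Filter
open scoped Classical

/-- A set `B` in `X`, equipped with the distance function `d`, has `p`-negative type:
for all finite collections of distinct points of `B` and real weights summing to zero,
`∑_{j,i} d(z_j, z_i)^p ζ_j ζ_i ≤ 0`. -/
def HasNegativeType {X : Type*} (d : X → X → ℝ) (p : ℝ) (B : Set X) : Prop :=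
  ∀ n : ℕ, 2 ≤ n → ∀ z : Fin n → X, Function.Injective z → (∀ k, z k ∈ B) →
    ∀ ζ : Fin n → ℝ, ∑ k, ζ k = 0 →
      ∑ j, ∑ i, d (z j) (z i) ^ p * (ζ j * ζ i) ≤ 0

/-- Strict `p`-negative type: `p`-negative type, with strict inequality whenever the
weight tuple `ζ` is nonzero. -/
def HasStrictNegativeType {X : Type*} (d : X → X → ℝ) (p : ℝ) (B : Set X) : Prop :=
  HasNegativeType d p B ∧
    ∀ n : ℕ, 2 ≤ n → ∀ z : Fin n → X, Function.Injective z → (∀ k, z k ∈ B) →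
      ∀ ζ : Fin n → ℝ, ∑ k, ζ k = 0 → ζ ≠ 0 →
        ∑ j, ∑ i, d (z j) (z i) ^ p * (ζ j * ζ i) < 0

/-- The `p`-simplex gap `γ_p(D)` of a signed `(s,t)`-simplex
`D = [x_j(m_j); y_i(n_i)]_{s,t}` with respect to the distance function `d`. -/
noncomputable def simplexGap {X : Type*} (d : X → X → ℝ) (p : ℝ) {s t : ℕ}
    (x : Fin s → X) (y : Fin t → X) (m : Fin s → ℝ) (n : Fin t → ℝ) : ℝ :=
  (∑ j, ∑ i, m j * n i * d (x j) (y i) ^ p)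
    - (∑ j₁, ∑ j₂, if j₁ < j₂ then m j₁ * m j₂ * d (x j₁) (x j₂) ^ p else 0)
    - (∑ i₁, ∑ i₂, if i₁ < i₂ then n i₁ * n i₂ * d (y i₁) (y i₂) ^ p else 0)

/-- A signed simplex is degenerate if for every point `z`, the repeating numbers
`m(z) = ∑_{j : x_j = z} m_j` and `n(z) = ∑_{i : y_i = z} n_i` coincide. -/
def SimplexDegenerate {X : Type*} {s t : ℕ}
    (x : Fin s → X) (y : Fin t → X) (m : Fin s → ℝ) (n : Fin t → ℝ) : Prop :=
  ∀ z : X, (∑ j, if x j = z then m j else 0) = (∑ i, if y i = z then n i else 0)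


/-- The distance on `L_p(Ω, μ)` induced by the `p`-(quasi-)norm:
`d(f, g) = ‖f − g‖_p = (∫ |f − g|^p dμ)^{1/p}`. -/
noncomputable def lpDist {Ω : Type*} [MeasurableSpace Ω] (p : ℝ) (μ : Measure Ω) (f g : Ω →ₘ[μ] ℝ) : ℝ :=
  (eLpNorm (⇑(f - g)) (ENNReal.ofReal p) μ).toReal

/-- A set of (a.e.-classes of) measurable functions is two-valued if it has more than one
element and the essential range of each member is a subset of `{0, 1}`. -/
def TwoValued {Ω : Type*} [MeasurableSpace Ω] {μ : Measure Ω} (B : Set (Ω →ₘ[μ] ℝ)) : Prop :=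
  B.Nontrivial ∧ ∀ f ∈ B, ∀ᵐ ω ∂μ, (f : Ω → ℝ) ω ∈ ({0, 1} : Set ℝ)

/-- `f` is a (Schauder) basis of `L_p(Ω, μ)`: each `f k` lies in `L_p(Ω, μ)`, and every
element of `L_p(Ω, μ)` admits a unique expansion `∑ a_k f_k` with real coefficients that
converges in the `L_p` (quasi-)norm metric. -/
def IsSchauderBasisLp {Ω : Type*} [MeasurableSpace Ω] (p : ℝ) (μ : Measure Ω)
    (f : ℕ → (Ω →ₘ[μ] ℝ)) : Prop :=
  (∀ k, MemLp (⇑(f k)) (ENNReal.ofReal p) μ) ∧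
    ∀ g : Ω →ₘ[μ] ℝ, MemLp (⇑g) (ENNReal.ofReal p) μ →
      ∃! a : ℕ → ℝ,
        Tendsto (fun N => lpDist p μ (∑ k ∈ Finset.range N, a k • f k) g) atTop (nhds 0)

/-!
For `0/1`-valued `F`, `G` one has `|F - G| ^ p = |F - G| = F + G - 2 F G` pointwise, hence
`‖F - G‖_p ^ p = ∫ F + ∫ G - 2 ∫ F G`. For weights `ζ` summing to zero the terms `∫ F_j + ∫ F_i`
drop out of the quadratic form, leaving
`∑_{j,i} ‖F_j - F_i‖_p ^ p ζ_j ζ_i = -2 ∫ (∑_j ζ_j F_j) ^ 2 ≤ 0`.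
Equality forces `∑_j ζ_j F_j = 0` a.e., and a Schauder basis is linearly independent, so `ζ = 0`.
-/

theorem sum_sum_add_mul_mul_eq_zero {ι : Type*} [Fintype ι] (c ζ : ι → ℝ)
    (hζ : ∑ k, ζ k = 0) : ∑ j, ∑ i, (c j + c i) * (ζ j * ζ i) = 0 := by
  have hleft : ∀ j, ∑ i, c j * (ζ j * ζ i) = c j * ζ j * ∑ i, ζ i := fun j => by
    rw [Finset.mul_sum]; exact Finset.sum_congr rfl fun i _ => by ring
  have hright : ∀ j, ∑ i, c i * (ζ j * ζ i) = ζ j * ∑ i, c i * ζ i := fun j => by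
    rw [Finset.mul_sum]; exact Finset.sum_congr rfl fun i _ => by ring
  simp only [add_mul, Finset.sum_add_distrib, hleft, hright, ← Finset.sum_mul, hζ, mul_zero,
    zero_mul, Finset.sum_const_zero, add_zero]

theorem sq_sum_mul_eq_sum_sum {ι : Type*} [Fintype ι] (ζ x : ι → ℝ) :
    (∑ j, ζ j * x j) ^ 2 = ∑ j, ∑ i, ζ j * ζ i * (x j * x i) := by
  rw [sq, Finset.sum_mul_sum]
  exact Finset.sum_congr rfl fun j _ => Finset.sum_congr rfl fun i _ => by ring

theorem norm_rpow_eq_abs_of_abs_mem_zero_one {p : ℝ} (hp : 0 < p) {x : ℝ}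
    (hx : |x| ∈ ({0, 1} : Set ℝ)) : ‖x‖ ^ p = |x| := by
  obtain h | h : |x| = 0 ∨ |x| = 1 := hx <;> simp [Real.norm_eq_abs, h, Real.zero_rpow hp.ne']

namespace MeasureTheory

variable {Ω : Type*} [MeasurableSpace Ω] {μ : Measure Ω} {p : ℝ}

theorem MemLp.integrable_of_abs_mem_zero_one (hp : 0 < p) {g : Ω → ℝ}
    (hg : MemLp g (ENNReal.ofReal p) μ) (h01 : ∀ᵐ ω ∂μ, |g ω| ∈ ({0, 1} : Set ℝ)) :
    Integrable g μ := by
  have hrpow := hg.integrable_norm_rpow (by simpa using hp) ENNReal.ofReal_ne_top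
  rw [ENNReal.toReal_ofReal hp.le] at hrpow
  refine (integrable_norm_iff hg.1).mp (hrpow.congr ?_)
  filter_upwards [h01] with ω hω
  rw [norm_rpow_eq_abs_of_abs_mem_zero_one hp hω, Real.norm_eq_abs]

theorem MemLp.eLpNorm_toReal_rpow_eq_integral_abs (hp : 0 < p) {g : Ω → ℝ}
    (hg : MemLp g (ENNReal.ofReal p) μ) (h01 : ∀ᵐ ω ∂μ, |g ω| ∈ ({0, 1} : Set ℝ)) :
    (eLpNorm g (ENNReal.ofReal p) μ).toReal ^ p = ∫ ω, |g ω| ∂μ := by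
  rw [hg.eLpNorm_eq_integral_rpow_norm (by simpa using hp) ENNReal.ofReal_ne_top,
    ENNReal.toReal_ofReal hp.le, ENNReal.toReal_ofReal (by positivity),
    ← Real.rpow_mul (integral_nonneg fun _ => by positivity), inv_mul_cancel₀ hp.ne',
    Real.rpow_one]
  exact integral_congr_ae (h01.mono fun ω hω => norm_rpow_eq_abs_of_abs_mem_zero_one hp hω)

theorem Integrable.mul_of_mem_zero_one {F G : Ω → ℝ} (hF : Integrable F μ)
    (hG : AEStronglyMeasurable G μ) (hG01 : ∀ᵐ ω ∂μ, G ω ∈ ({0, 1} : Set ℝ)) :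
    Integrable (fun ω => F ω * G ω) μ := by
  refine hF.mono (hF.1.mul hG) ?_
  filter_upwards [hG01] with ω hω
  obtain h | h : G ω = 0 ∨ G ω = 1 := hω <;> simp [h]

variable (hp : 0 < p) {F G : Ω → ℝ}
  (hF : MemLp F (ENNReal.ofReal p) μ) (hF01 : ∀ᵐ ω ∂μ, F ω ∈ ({0, 1} : Set ℝ))
  (hG : MemLp G (ENNReal.ofReal p) μ) (hG01 : ∀ᵐ ω ∂μ, G ω ∈ ({0, 1} : Set ℝ))
include hp hF hF01

theorem MemLp.integrable_of_mem_zero_one : Integrable F μ :=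
  hF.integrable_of_abs_mem_zero_one hp <| hF01.mono fun ω hω => by
    obtain h | h : F ω = 0 ∨ F ω = 1 := hω <;> simp [h]

include hG hG01

theorem eLpNorm_sub_toReal_rpow_eq_of_mem_zero_one :
    (eLpNorm (F - G) (ENNReal.ofReal p) μ).toReal ^ p
      = ∫ ω, F ω ∂μ + ∫ ω, G ω ∂μ - 2 * ∫ ω, F ω * G ω ∂μ := by
  have hFi := hF.integrable_of_mem_zero_one hp hF01
  have hGi := hG.integrable_of_mem_zero_one hp hG01
  have hvals : ∀ᵐ ω ∂μ, (F ω = 0 ∨ F ω = 1) ∧ (G ω = 0 ∨ G ω = 1) := hF01.and hG01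
  have habs : ∀ᵐ ω ∂μ, |(F - G) ω| = F ω + G ω - 2 * (F ω * G ω) :=
    hvals.mono fun ω ⟨h₁, h₂⟩ => by
      rcases h₁ with h₁ | h₁ <;> rcases h₂ with h₂ | h₂ <;> norm_num [h₁, h₂]
  have habs01 : ∀ᵐ ω ∂μ, |(F - G) ω| ∈ ({0, 1} : Set ℝ) :=
    hvals.mono fun ω ⟨h₁, h₂⟩ => by
      rcases h₁ with h₁ | h₁ <;> rcases h₂ with h₂ | h₂ <;> norm_num [h₁, h₂]
  rw [(hF.sub hG).eLpNorm_toReal_rpow_eq_integral_abs hp habs01, integral_congr_ae habs,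
    integral_sub (f := fun ω => F ω + G ω) (hFi.add hGi)
      ((hFi.mul_of_mem_zero_one hG.1 hG01).const_mul 2),
    integral_add hFi hGi, integral_const_mul]

end MeasureTheory

section GramForm

variable {Ω : Type*} [MeasurableSpace Ω] {μ : Measure Ω} {ι : Type*} {F : ι → Ω → ℝ}

theorem integrable_sq_sum_mul [Fintype ι] (hFF : ∀ j i, Integrable (fun ω => F j ω * F i ω) μ)
    (ζ : ι → ℝ) : Integrable (fun ω => (∑ j, ζ j * F j ω) ^ 2) μ := by
  simp_rw [sq_sum_mul_eq_sum_sum]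
  exact integrable_finsetSum _ fun j _ =>
    integrable_finsetSum _ fun i _ => (hFF j i).const_mul _

theorem integral_sq_sum_mul [Fintype ι] (hFF : ∀ j i, Integrable (fun ω => F j ω * F i ω) μ)
    (ζ : ι → ℝ) :
    ∫ ω, (∑ j, ζ j * F j ω) ^ 2 ∂μ = ∑ j, ∑ i, ζ j * ζ i * ∫ ω, F j ω * F i ω ∂μ := by
  simp_rw [sq_sum_mul_eq_sum_sum]
  rw [integral_finsetSum _ fun j _ =>
    integrable_finsetSum _ fun i _ => (hFF j i).const_mul _]
  refine Finset.sum_congr rfl fun j _ => ?_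
  rw [integral_finsetSum _ fun i _ => (hFF j i).const_mul _]
  exact Finset.sum_congr rfl fun i _ => integral_const_mul _ _

variable {p : ℝ} (hp : 0 < p) (hF : ∀ j, MemLp (F j) (ENNReal.ofReal p) μ)
  (hF01 : ∀ j, ∀ᵐ ω ∂μ, F j ω ∈ ({0, 1} : Set ℝ))
include hp hF hF01

theorem integrable_mul_of_mem_zero_one (j i : ι) :
    Integrable (fun ω => F j ω * F i ω) μ :=
  ((hF j).integrable_of_mem_zero_one hp (hF01 j)).mul_of_mem_zero_one (hF i).1 (hF01 i)

theorem sum_sum_eLpNorm_sub_rpow_mul_eq [Fintype ι] {ζ : ι → ℝ} (hζ : ∑ k, ζ k = 0) :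
    ∑ j, ∑ i, (eLpNorm (F j - F i) (ENNReal.ofReal p) μ).toReal ^ p * (ζ j * ζ i)
      = -2 * ∫ ω, (∑ j, ζ j * F j ω) ^ 2 ∂μ := by
  set c : ι → ℝ := fun j => ∫ ω, F j ω ∂μ
  set m : ι → ι → ℝ := fun j i => ∫ ω, F j ω * F i ω ∂μ
  calc ∑ j, ∑ i, (eLpNorm (F j - F i) (ENNReal.ofReal p) μ).toReal ^ p * (ζ j * ζ i)
      = ∑ j, ∑ i, ((c j + c i) * (ζ j * ζ i) - 2 * (ζ j * ζ i * m j i)) := by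
        refine Finset.sum_congr rfl fun j _ => Finset.sum_congr rfl fun i _ => ?_
        rw [eLpNorm_sub_toReal_rpow_eq_of_mem_zero_one hp (hF j) (hF01 j) (hF i) (hF01 i)]
        ring
    _ = ∑ j, ∑ i, (c j + c i) * (ζ j * ζ i) - 2 * ∑ j, ∑ i, ζ j * ζ i * m j i := by
        simp only [Finset.sum_sub_distrib, Finset.mul_sum]
    _ = -2 * ∫ ω, (∑ j, ζ j * F j ω) ^ 2 ∂μ := by
        rw [sum_sum_add_mul_mul_eq_zero c ζ hζ,
          integral_sq_sum_mul (integrable_mul_of_mem_zero_one hp hF hF01)]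
        ring

end GramForm

section TwoValuedFamily

variable {Ω : Type*} [MeasurableSpace Ω] {μ : Measure Ω} {p : ℝ}

theorem lpDist_self (g : Ω →ₘ[μ] ℝ) : lpDist p μ g g = 0 := by
  rw [lpDist, sub_self, eLpNorm_congr_ae AEEqFun.coeFn_zero, eLpNorm_zero, ENNReal.toReal_zero]

theorem IsSchauderBasisLp.linearIndependent {f : ℕ → Ω →ₘ[μ] ℝ}
    (hf : IsSchauderBasisLp p μ f) : LinearIndependent ℝ f := by
  rw [linearIndependent_iff']
  intro s g hsum k hk
  -- `g`, extended by zero, and `0` are two expansions of `0`.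
  set a : ℕ → ℝ := fun k => if k ∈ s then g k else 0
  have hzero : MemLp ⇑(0 : Ω →ₘ[μ] ℝ) (ENNReal.ofReal p) μ :=
    (memLp_congr_ae AEEqFun.coeFn_zero).mpr MemLp.zero
  have ha : Tendsto (fun N => lpDist p μ (∑ k ∈ Finset.range N, a k • f k) 0) atTop (nhds 0) := by
    obtain ⟨N₀, hN₀⟩ := Finset.exists_nat_subset_range s
    refine tendsto_const_nhds.congr' ?_
    filter_upwards [eventually_ge_atTop N₀] with N hN
    have hpartial : ∑ k ∈ Finset.range N, a k • f k = ∑ k ∈ s, g k • f k := by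
      rw [← Finset.sum_subset (hN₀.trans (Finset.range_subset_range.mpr hN))
        fun k _ hks => by simp [a, hks]]
      exact Finset.sum_congr rfl fun k hks => by simp [a, hks]
    rw [hpartial, hsum, lpDist_self]
  have h0 : Tendsto (fun N => lpDist p μ (∑ k ∈ Finset.range N, (0 : ℕ → ℝ) k • f k) 0)
      atTop (nhds 0) := by
    simp [lpDist_self]
  simpa [a, hk] using congrFun ((hf.2 0 hzero).unique ha h0) k

variable {ι : Type*} [Fintype ι]

theorem coeFn_sum_smul_ae_eq (ζ : ι → ℝ) (z : ι → Ω →ₘ[μ] ℝ) :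
    ⇑(∑ j, ζ j • z j) =ᵐ[μ] fun ω => ∑ j, ζ j * z j ω := by
  filter_upwards [AEEqFun.coeFn_fun_finsetSum Finset.univ (fun j => ζ j • z j),
    ae_all_iff.mpr fun j => AEEqFun.coeFn_smul (ζ j) (z j)] with ω hsum hsmul
  simp [hsum, hsmul]

theorem integral_sq_sum_mul_pos {z : ι → Ω →ₘ[μ] ℝ} (hz : LinearIndependent ℝ z)
    {ζ : ι → ℝ} (hζ : ζ ≠ 0) (hint : Integrable (fun ω => (∑ j, ζ j * z j ω) ^ 2) μ) :
    0 < ∫ ω, (∑ j, ζ j * z j ω) ^ 2 ∂μ := by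
  refine (integral_nonneg fun ω => sq_nonneg _).lt_of_ne fun h0 => hζ ?_
  have hsq := (integral_eq_zero_iff_of_nonneg (fun ω => sq_nonneg _) hint).mp h0.symm
  refine funext <| Fintype.linearIndependent_iff.mp hz ζ (AEEqFun.ext ?_)
  filter_upwards [coeFn_sum_smul_ae_eq ζ z, hsq, AEEqFun.coeFn_zero (β := ℝ)] with ω h₁ h₂ h₃
  rw [h₁, h₃]
  exact pow_eq_zero_iff two_ne_zero |>.mp h₂

variable (hp : 0 < p) {z : ι → Ω →ₘ[μ] ℝ} (hz : ∀ j, MemLp (z j) (ENNReal.ofReal p) μ)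
  (hz01 : ∀ j, ∀ᵐ ω ∂μ, z j ω ∈ ({0, 1} : Set ℝ))
include hp hz hz01

theorem sum_sum_lpDist_rpow_mul_eq {ζ : ι → ℝ} (hζ : ∑ k, ζ k = 0) :
    ∑ j, ∑ i, lpDist p μ (z j) (z i) ^ p * (ζ j * ζ i)
      = -2 * ∫ ω, (∑ j, ζ j * z j ω) ^ 2 ∂μ := by
  rw [← sum_sum_eLpNorm_sub_rpow_mul_eq hp hz hz01 hζ]
  refine Finset.sum_congr rfl fun j _ => Finset.sum_congr rfl fun i _ => ?_
  rw [lpDist, eLpNorm_congr_ae (AEEqFun.coeFn_sub _ _)]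

theorem sum_sum_lpDist_rpow_mul_nonpos {ζ : ι → ℝ} (hζ : ∑ k, ζ k = 0) :
    ∑ j, ∑ i, lpDist p μ (z j) (z i) ^ p * (ζ j * ζ i) ≤ 0 := by
  rw [sum_sum_lpDist_rpow_mul_eq hp hz hz01 hζ]
  have : 0 ≤ ∫ ω, (∑ j, ζ j * z j ω) ^ 2 ∂μ := integral_nonneg fun ω => sq_nonneg _
  linarith

theorem sum_sum_lpDist_rpow_mul_neg (hli : LinearIndependent ℝ z) {ζ : ι → ℝ}
    (hζ : ∑ k, ζ k = 0) (hζ0 : ζ ≠ 0) :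
    ∑ j, ∑ i, lpDist p μ (z j) (z i) ^ p * (ζ j * ζ i) < 0 := by
  rw [sum_sum_lpDist_rpow_mul_eq hp hz hz01 hζ]
  have := integral_sq_sum_mul_pos hli hζ0 <|
    integrable_sq_sum_mul (integrable_mul_of_mem_zero_one hp hz hz01) ζ
  linarith

end TwoValuedFamily

/-- Every two-valued (Schauder) basis of `L_p(Ω, μ)` has strict
`p`-negative type when viewed as a metric subspace of `L_p(Ω, μ)`. -/
theorem twoValued_schauderBasis_strictNegativeType {Ω : Type*} [MeasurableSpace Ω]
    (μ : Measure Ω) (p : ℝ) (hp : 0 < p) (f : ℕ → (Ω →ₘ[μ] ℝ))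
    (hbasis : IsSchauderBasisLp p μ f) (htv : TwoValued (Set.range f)) :
    HasStrictNegativeType (lpDist p μ) p (Set.range f) := by
  have hmem : ∀ g ∈ Set.range f, MemLp g (ENNReal.ofReal p) μ := by
    rintro _ ⟨k, rfl⟩
    exact hbasis.1 k
  refine ⟨fun n _ z _ hz ζ hζ => ?_, fun n _ z hinj hz ζ hζ hζ0 => ?_⟩
  · exact sum_sum_lpDist_rpow_mul_nonpos hp (fun j => hmem _ (hz j)) (fun j => htv.2 _ (hz j)) hζ
  · obtain ⟨k, rfl⟩ : ∃ k : Fin n → ℕ, f ∘ k = z :=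
      ⟨fun j => (hz j).choose, funext fun j => (hz j).choose_spec⟩
    exact sum_sum_lpDist_rpow_mul_neg hp (fun j => hmem _ (hz j)) (fun j => htv.2 _ (hz j))
      (hbasis.linearIndependent.comp k hinj.of_comp) hζ hζ0
end

section
/- Let p ∈ (0, ∞), let (Ω, μ) be a measure space, and let B ⊂ L_p(Ω, μ) be a two-valued set that is affinely dependent when L_p(Ω, μ) is considered as a real vector space. Then no metric space that has strict p-negative type is isometric to B (with the metric B inherits from L_p(Ω, μ)). In particular, no ultrametric space is isometric to B. -/
open MeasureTheory ENNReal Filter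
open scoped Classical

/-!
Two-valued functions satisfy `|f - g|^p = (f - g)^2` almost everywhere, so on `B` the `p`-th power
of the `L_p` distance is the squared `L_2` distance. For an affine dependence `∑ wᵢ fᵢ = 0` with
`∑ wᵢ = 0`, pointwise `∑ᵢⱼ (fᵢ - fⱼ)^2 wᵢ wⱼ = -2 (∑ wᵢ fᵢ)^2 = 0`; so the `p`-negative type form of
`B` vanishes at a nonzero weight vector, which strict `p`-negative type forbids.

Ultrametric spaces have strict `p`-negative type: `d^p` is again an ultrametric, and for `c` at
least the diameter of a finite set `s` the form `∑ (c - d(x, y)) ζₓ ζ_y` is positive definite.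
By induction on `s`: if `M = d(a, b)` is the diameter, then `d(a, ·) < M` splits `s` into two
smaller blocks at mutual distance `M`, and the form becomes `(c - M) (∑ ζ)^2` plus the two block
forms for `M`.
-/

open Finset

theorem Finset.sum_sum_const_mul_mul {ι : Type*} (s : Finset ι) (c : ℝ) (ζ : ι → ℝ) :
    ∑ x ∈ s, ∑ y ∈ s, c * (ζ x * ζ y) = c * (∑ x ∈ s, ζ x) ^ 2 := by
  simp_rw [sq, sum_mul_sum, mul_sum]

theorem Finset.sum_sum_sq_sub_mul_eq {ι : Type*} (s : Finset ι) (a ζ : ι → ℝ)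
    (hζ : ∑ i ∈ s, ζ i = 0) :
    ∑ i ∈ s, ∑ j ∈ s, (a i - a j) ^ 2 * (ζ i * ζ j) = -2 * (∑ i ∈ s, ζ i * a i) ^ 2 := by
  have h : ∀ i j, (a i - a j) ^ 2 * (ζ i * ζ j) =
      (a i ^ 2 * ζ i) * ζ j + ζ i * (a j ^ 2 * ζ j) - 2 * ((ζ i * a i) * (ζ j * a j)) :=
    fun i j => by ring
  simp_rw [h, sum_sub_distrib, sum_add_distrib, ← mul_sum, ← sum_mul, hζ, sq, sum_mul_sum]
  ring

theorem Finset.sum_sum_eq_add_filter_of_cross_eq_zero {α β : Type*} [AddCommMonoid β]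
    (s : Finset α) (P : α → Prop) [DecidablePred P] (f : α → α → β)
    (hf : ∀ x ∈ s, ∀ y ∈ s, P x → ¬ P y → f x y = 0 ∧ f y x = 0) :
    ∑ x ∈ s, ∑ y ∈ s, f x y =
      ∑ x ∈ s.filter P, ∑ y ∈ s.filter P, f x y
        + ∑ x ∈ s.filter (¬ P ·), ∑ y ∈ s.filter (¬ P ·), f x y := by
  rw [← sum_filter_add_sum_filter_not s P]
  congr 1 <;> refine sum_congr rfl fun x hx => ?_ <;>
    rw [← sum_filter_add_sum_filter_not s P] <;> obtain ⟨hxs, hPx⟩ := mem_filter.1 hx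
  · rw [sum_eq_zero fun y hy => (hf x hxs y (mem_filter.1 hy).1 hPx (mem_filter.1 hy).2).1,
      add_zero]
  · rw [sum_eq_zero fun y hy => (hf y (mem_filter.1 hy).1 x hxs (mem_filter.1 hy).2 hPx).2,
      zero_add]

/-- Ultrametric axioms for a bare kernel, so that they apply to `d(zᵢ, zⱼ)^p` without building a
new metric space. -/
structure IsUltrametric {ι : Type*} (e : ι → ι → ℝ) : Prop where
  symm : ∀ x y, e x y = e y x
  self : ∀ x, e x x = 0
  pos : ∀ x y, x ≠ y → 0 < e x y
  le_max : ∀ x y z, e x z ≤ max (e x y) (e y z)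

namespace IsUltrametric

variable {ι : Type*} {e : ι → ι → ℝ}

theorem eq_of_lt_of_not_lt (he : IsUltrametric e) {a x y : ι} {M : ℝ} (hxy : e x y ≤ M)
    (hx : e a x < M) (hy : ¬ e a y < M) : e x y = M := by
  refine hxy.antisymm (not_lt.1 fun h => hy ?_)
  exact (he.le_max a x y).trans_lt (max_lt hx h)

theorem sum_sum_sub_mul_eq_add_filter (he : IsUltrametric e) {s : Finset ι} {a : ι} {M : ℝ}
    (hM : ∀ x ∈ s, ∀ y ∈ s, e x y ≤ M) (c : ℝ) (ζ : ι → ℝ) :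
    ∑ x ∈ s, ∑ y ∈ s, (c - e x y) * (ζ x * ζ y) =
      (c - M) * (∑ x ∈ s, ζ x) ^ 2
        + (∑ x ∈ s.filter (e a · < M), ∑ y ∈ s.filter (e a · < M), (M - e x y) * (ζ x * ζ y)
          + ∑ x ∈ s.filter (¬ e a · < M), ∑ y ∈ s.filter (¬ e a · < M),
              (M - e x y) * (ζ x * ζ y)) := by
  have hcross : ∀ x ∈ s, ∀ y ∈ s, e a x < M → ¬ e a y < M →
      (M - e x y) * (ζ x * ζ y) = 0 ∧ (M - e y x) * (ζ y * ζ x) = 0 := by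
    intro x hx y hy hax hay
    have hxy := he.eq_of_lt_of_not_lt (hM x hx y hy) hax hay
    simp [he.symm y x, hxy]
  rw [← sum_sum_eq_add_filter_of_cross_eq_zero s _ _ hcross, ← sum_sum_const_mul_mul,
    ← sum_add_distrib]
  refine sum_congr rfl fun x _ => ?_
  rw [← sum_add_distrib]
  exact sum_congr rfl fun y _ => by ring

theorem sum_sum_sub_mul_pos (he : IsUltrametric e) (s : Finset ι) {c : ℝ} (hc : 0 < c)
    (hle : ∀ x ∈ s, ∀ y ∈ s, e x y ≤ c) {ζ : ι → ℝ} (hζ : ∃ x ∈ s, ζ x ≠ 0) :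
    0 < ∑ x ∈ s, ∑ y ∈ s, (c - e x y) * (ζ x * ζ y) := by
  induction s using Finset.strongInduction generalizing c with
  | H s ih =>
  obtain ⟨x₀, hx₀, hζ₀⟩ := hζ
  rcases s.eq_singleton_or_nontrivial hx₀ with rfl | hs
  · simpa [he.self] using mul_pos hc (mul_self_pos.2 hζ₀)
  obtain ⟨⟨a, b⟩, hab, hmax⟩ :=
    exists_max_image (s ×ˢ s) (fun q => e q.1 q.2) (hs.nonempty.product hs.nonempty)
  obtain ⟨ha, hb⟩ := mem_product.1 hab
  have hM : ∀ x ∈ s, ∀ y ∈ s, e x y ≤ e a b := fun x hx y hy =>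
    hmax (x, y) (mem_product.2 ⟨hx, hy⟩)
  have hMpos : 0 < e a b := by
    obtain ⟨x, hx, y, hy, hxy⟩ := hs
    exact (he.pos x y hxy).trans_le (hM x hx y hy)
  have hpos : ∀ t ⊂ s, (∃ x ∈ t, ζ x ≠ 0) →
      0 < ∑ x ∈ t, ∑ y ∈ t, (e a b - e x y) * (ζ x * ζ y) := fun t hts =>
    ih t hts hMpos fun x hx y hy => hM x (hts.1 hx) y (hts.1 hy)
  have hnonneg : ∀ t ⊂ s, 0 ≤ ∑ x ∈ t, ∑ y ∈ t, (e a b - e x y) * (ζ x * ζ y) := by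
    intro t hts
    by_cases h : ∃ x ∈ t, ζ x ≠ 0
    · exact (hpos t hts h).le
    · push Not at h
      exact (sum_eq_zero fun x hx => sum_eq_zero fun y _ => by simp [h x hx]).ge
  have hsub : s.filter (e a · < e a b) ⊂ s := filter_ssubset.2 ⟨b, hb, lt_irrefl _⟩
  have hsub' : s.filter (¬ e a · < e a b) ⊂ s :=
    filter_ssubset.2 ⟨a, ha, not_not.2 (by rwa [he.self])⟩
  have hcM : 0 ≤ (c - e a b) * (∑ x ∈ s, ζ x) ^ 2 :=
    mul_nonneg (sub_nonneg.2 (hle a ha b hb)) (sq_nonneg _)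
  rw [he.sum_sum_sub_mul_eq_add_filter hM]
  by_cases hx₀a : e a x₀ < e a b
  · linarith [hpos _ hsub ⟨x₀, mem_filter.2 ⟨hx₀, hx₀a⟩, hζ₀⟩, hnonneg _ hsub']
  · linarith [hpos _ hsub' ⟨x₀, mem_filter.2 ⟨hx₀, hx₀a⟩, hζ₀⟩, hnonneg _ hsub]

theorem sum_sum_mul_neg (he : IsUltrametric e) {s : Finset ι} {ζ : ι → ℝ}
    (hsum : ∑ x ∈ s, ζ x = 0) (hζ : ∃ x ∈ s, ζ x ≠ 0) :
    ∑ x ∈ s, ∑ y ∈ s, e x y * (ζ x * ζ y) < 0 := by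
  obtain ⟨x₀, hx₀, -⟩ := id hζ
  obtain ⟨⟨a, b⟩, -, hmax⟩ :=
    exists_max_image (s ×ˢ s) (fun q => e q.1 q.2) ⟨(x₀, x₀), mem_product.2 ⟨hx₀, hx₀⟩⟩
  have hpos := he.sum_sum_sub_mul_pos s (c := max (e a b) 1) (by positivity)
    (fun x hx y hy => (hmax (x, y) (mem_product.2 ⟨hx, hy⟩)).trans (le_max_left _ _)) hζ
  simp_rw [sub_mul, sum_sub_distrib, sum_sum_const_mul_mul, hsum] at hpos
  linarith

end IsUltrametric

theorem isUltrametric_rpow_dist {X ι : Type*} [MetricSpace X] [IsUltrametricDist X] {z : ι → X}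
    (hz : Function.Injective z) {p : ℝ} (hp : 0 < p) :
    IsUltrametric fun i j => dist (z i) (z j) ^ p where
  symm i j := by rw [dist_comm]
  self i := by simp [hp.ne']
  pos i j hij := Real.rpow_pos_of_pos (dist_pos.2 (hz.ne hij)) p
  le_max i j k := by
    rw [← Real.rpow_max dist_nonneg dist_nonneg hp.le]
    exact Real.rpow_le_rpow dist_nonneg (dist_triangle_max _ _ _) hp.le

theorem hasStrictNegativeType_of_forall_lt {X : Type*} {d : X → X → ℝ} {p : ℝ} {B : Set X}
    (h : ∀ n : ℕ, 2 ≤ n → ∀ z : Fin n → X, Function.Injective z → (∀ k, z k ∈ B) →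
      ∀ ζ : Fin n → ℝ, ∑ k, ζ k = 0 → ζ ≠ 0 → ∑ j, ∑ i, d (z j) (z i) ^ p * (ζ j * ζ i) < 0) :
    HasStrictNegativeType d p B := by
  refine ⟨fun n hn z hz hzB ζ hsum => ?_, h⟩
  rcases eq_or_ne ζ 0 with rfl | hζ
  · simp
  · exact (h n hn z hz hzB ζ hsum hζ).le

theorem IsUltrametricDist.hasStrictNegativeType {X : Type*} [MetricSpace X] [IsUltrametricDist X]
    {p : ℝ} (hp : 0 < p) : HasStrictNegativeType (fun a b : X => dist a b) p Set.univ :=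
  hasStrictNegativeType_of_forall_lt fun _ _ _ hz _ _ hsum hζ =>
    (isUltrametric_rpow_dist hz hp).sum_sum_mul_neg hsum (by simpa [Function.ne_iff] using hζ)

theorem HasStrictNegativeType.sum_sum_lt {X ι : Type*} {d : X → X → ℝ} {p : ℝ} {B : Set X}
    (hd : HasStrictNegativeType d p B) {s : Finset ι} {z : ι → X} (hz : Set.InjOn z s)
    (hzB : ∀ i ∈ s, z i ∈ B) {ζ : ι → ℝ} (hsum : ∑ i ∈ s, ζ i = 0) (hζ : ∃ i ∈ s, ζ i ≠ 0) :
    ∑ i ∈ s, ∑ j ∈ s, d (z i) (z j) ^ p * (ζ i * ζ j) < 0 := by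
  obtain ⟨i₀, hi₀, hζi₀⟩ := hζ
  have hcard : 2 ≤ s.card := by
    rcases s.eq_singleton_or_nontrivial hi₀ with rfl | hs
    · exact absurd (by simpa using hsum) hζi₀
    · exact one_lt_card_iff_nontrivial.2 hs
  set g := s.equivFin.symm
  have hreindex : ∀ F : ι → ℝ, ∑ k, F (g k) = ∑ i ∈ s, F i := fun F =>
    (Equiv.sum_comp g fun i : s => F i).trans (sum_coe_sort s F)
  have hzg : Function.Injective fun k => z (g k) := fun k l h =>
    g.injective (Subtype.ext (hz (g k).2 (g l).2 h))
  have hζg : (fun k => ζ (g k)) ≠ 0 := fun h => hζi₀ <| by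
    simpa [g] using congrFun h (s.equivFin ⟨i₀, hi₀⟩)
  have hreindex₂ : ∀ F : ι → ι → ℝ, ∑ k, ∑ l, F (g k) (g l) = ∑ i ∈ s, ∑ j ∈ s, F i j :=
    fun F => (sum_congr rfl fun k _ => hreindex (F (g k))).trans (hreindex fun i => ∑ j ∈ s, F i j)
  exact (hreindex₂ fun i j => d (z i) (z j) ^ p * (ζ i * ζ j)).symm.trans_lt <|
    hd.2 s.card hcard _ hzg (fun k => hzB _ (g k).2) _ ((hreindex ζ).trans hsum) hζg

section Lp

variable {Ω : Type*} [MeasurableSpace Ω] {μ : Measure Ω} {p : ℝ}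

theorem lpDist_rpow_eq_integral (hp : 0 < p) {f g : Ω →ₘ[μ] ℝ}
    (hf : MemLp f (ENNReal.ofReal p) μ) (hg : MemLp g (ENNReal.ofReal p) μ) :
    lpDist p μ f g ^ p = ∫ ω, ‖f ω - g ω‖ ^ p ∂μ := by
  have hfg : MemLp (⇑(f - g)) (ENNReal.ofReal p) μ :=
    (hf.sub hg).ae_eq (AEEqFun.coeFn_sub f g).symm
  rw [lpDist, hfg.eLpNorm_eq_integral_rpow_norm (by simpa using hp) ofReal_ne_top,
    toReal_ofReal hp.le, toReal_ofReal (by positivity), ← Real.rpow_mul (by positivity),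
    inv_mul_cancel₀ hp.ne', Real.rpow_one]
  exact integral_congr_ae <| (AEEqFun.coeFn_sub f g).mono fun ω h => by simp [h]

theorem norm_sub_rpow_eq_sq_of_mem_zero_one (hp : 0 < p) {a b : ℝ} (ha : a ∈ ({0, 1} : Set ℝ))
    (hb : b ∈ ({0, 1} : Set ℝ)) : ‖a - b‖ ^ p = (a - b) ^ 2 := by
  rcases ha with rfl | rfl <;> rcases hb with rfl | rfl <;> simp [hp.ne']

theorem sq_sub_ae_eq_norm_sub_rpow (hp : 0 < p) {f g : Ω →ₘ[μ] ℝ}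
    (hf : ∀ᵐ ω ∂μ, f ω ∈ ({0, 1} : Set ℝ)) (hg : ∀ᵐ ω ∂μ, g ω ∈ ({0, 1} : Set ℝ)) :
    (fun ω => (f ω - g ω) ^ 2) =ᵐ[μ] fun ω => ‖f ω - g ω‖ ^ p := by
  filter_upwards [hf, hg] with ω hfω hgω using
    (norm_sub_rpow_eq_sq_of_mem_zero_one hp hfω hgω).symm

end Lp

namespace MeasureTheory.AEEqFun

variable {Ω ι : Type*} [MeasurableSpace Ω] {μ : Measure Ω}

theorem ae_sum_smul_eq_zero {s : Finset ι} {f : ι → Ω →ₘ[μ] ℝ} {w : ι → ℝ}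
    (hwf : ∑ i ∈ s, w i • f i = 0) : ∀ᵐ ω ∂μ, ∑ i ∈ s, w i * f i ω = 0 := by
  have hsmul : ∀ᵐ ω ∂μ, ∀ i ∈ s, (w i • f i) ω = w i * f i ω :=
    (eventually_all_finset s).2 fun i _ => (coeFn_smul (w i) (f i)).mono fun ω h => h
  filter_upwards [coeFn_fun_finsetSum s (fun i => w i • f i), coeFn_zero (β := ℝ) (μ := μ),
    hsmul] with ω hsum h0 hsmul
  rw [← sum_congr rfl hsmul, ← hsum, hwf]
  exact h0

theorem sum_sum_integral_sq_sub_mul_eq_zero {s : Finset ι}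
    {f : ι → Ω →ₘ[μ] ℝ} {w : ι → ℝ} (hw : ∑ i ∈ s, w i = 0) (hwf : ∑ i ∈ s, w i • f i = 0)
    (hint : ∀ i ∈ s, ∀ j ∈ s, MeasureTheory.Integrable (fun ω => (f i ω - f j ω) ^ 2) μ) :
    ∑ i ∈ s, ∑ j ∈ s, (∫ ω, (f i ω - f j ω) ^ 2 ∂μ) * (w i * w j) = 0 := by
  calc ∑ i ∈ s, ∑ j ∈ s, (∫ ω, (f i ω - f j ω) ^ 2 ∂μ) * (w i * w j)
      = ∫ ω, ∑ i ∈ s, ∑ j ∈ s, (f i ω - f j ω) ^ 2 * (w i * w j) ∂μ := by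
        rw [integral_finsetSum _ fun i hi => integrable_finsetSum _ fun j hj =>
          (hint i hi j hj).mul_const _]
        refine sum_congr rfl fun i hi => ?_
        rw [integral_finsetSum _ fun j hj => (hint i hi j hj).mul_const _]
        simp_rw [integral_mul_const]
    _ = ∫ _, (0 : ℝ) ∂μ := by
        refine integral_congr_ae <| (ae_sum_smul_eq_zero hwf).mono fun ω h => ?_
        simp only [sum_sum_sq_sub_mul_eq s _ w hw, h]
        ring
    _ = 0 := integral_zero _ _

end MeasureTheory.AEEqFun

theorem no_isometry_of_hasStrictNegativeType {Ω : Type*} [MeasurableSpace Ω] {μ : Measure Ω}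
    {p : ℝ} (hp : 0 < p) {B : Set (Ω →ₘ[μ] ℝ)} (hB : ∀ f ∈ B, ∀ᵐ ω ∂μ, f ω ∈ ({0, 1} : Set ℝ))
    (hBLp : ∀ f ∈ B, MemLp f (ENNReal.ofReal p) μ)
    (hdep : ¬ AffineIndependent ℝ ((↑) : B → (Ω →ₘ[μ] ℝ))) {X : Type*} [MetricSpace X]
    (hX : HasStrictNegativeType (fun a b : X => dist a b) p Set.univ) :
    ¬ ∃ φ : X → (Ω →ₘ[μ] ℝ), Set.range φ = B ∧ ∀ a b : X, lpDist p μ (φ a) (φ b) = dist a b := by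
  rintro ⟨φ, rfl, hφ⟩
  rw [affineIndependent_iff] at hdep
  push Not at hdep
  obtain ⟨s, w, hw, hwf, i, hi, hwi⟩ := hdep
  have hdist : ∀ f g : Set.range φ,
      dist (Set.rangeSplitting φ f) (Set.rangeSplitting φ g) ^ p =
        ∫ ω, ((f : Ω →ₘ[μ] ℝ) ω - (g : Ω →ₘ[μ] ℝ) ω) ^ 2 ∂μ := fun f g => by
    rw [← hφ, Set.apply_rangeSplitting φ, Set.apply_rangeSplitting φ,
      lpDist_rpow_eq_integral hp (hBLp f f.2) (hBLp g g.2)]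
    exact integral_congr_ae (sq_sub_ae_eq_norm_sub_rpow hp (hB f f.2) (hB g g.2)).symm
  have hint : ∀ f ∈ s, ∀ g ∈ s,
      Integrable (fun ω => ((f : Ω →ₘ[μ] ℝ) ω - (g : Ω →ₘ[μ] ℝ) ω) ^ 2) μ := fun f _ g _ => by
    have := ((hBLp f f.2).sub (hBLp g g.2)).integrable_norm_rpow (by simpa using hp) ofReal_ne_top
    rw [toReal_ofReal hp.le] at this
    exact this.congr (sq_sub_ae_eq_norm_sub_rpow hp (hB f f.2) (hB g g.2)).symm
  refine (hX.sum_sum_lt (Set.rangeSplitting_injective φ).injOn (fun _ _ => Set.mem_univ _) hw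
    ⟨i, hi, hwi⟩).ne ?_
  simp only [hdist]
  exact AEEqFun.sum_sum_integral_sq_sub_mul_eq_zero hw hwf hint

/-- If `B ⊂ L_p(Ω, μ)` is two-valued and affinely dependent, then no
metric space of strict `p`-negative type is isometric to `B`; in particular, no
ultrametric space is isometric to `B`. -/
theorem twoValued_affineDependent_no_isometry {Ω : Type*} [MeasurableSpace Ω]
    (μ : Measure Ω) (p : ℝ) (hp : 0 < p) (B : Set (Ω →ₘ[μ] ℝ)) (hB : TwoValued B)
    (hBLp : ∀ f ∈ B, MemLp (⇑f) (ENNReal.ofReal p) μ)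
    (hdep : ¬ AffineIndependent ℝ ((↑) : B → (Ω →ₘ[μ] ℝ))) :
    (∀ (X : Type*) [MetricSpace X], Nontrivial X →
      HasStrictNegativeType (fun a b : X => dist a b) p (Set.univ : Set X) →
      ¬ ∃ φ : X → (Ω →ₘ[μ] ℝ), Set.range φ = B ∧
          ∀ a b : X, lpDist p μ (φ a) (φ b) = dist a b) ∧
    (∀ (X : Type*) [MetricSpace X], Nontrivial X →
      (∀ a b c : X, dist a c ≤ max (dist a b) (dist b c)) →
      ¬ ∃ φ : X → (Ω →ₘ[μ] ℝ), Set.range φ = B ∧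
          ∀ a b : X, lpDist p μ (φ a) (φ b) = dist a b) := by
  refine ⟨fun X _ _ hX => no_isometry_of_hasStrictNegativeType hp hB.2 hBLp hdep hX,
    fun X _ _ hX => ?_⟩
  have : IsUltrametricDist X := ⟨hX⟩
  exact no_isometry_of_hasStrictNegativeType hp hB.2 hBLp hdep
    (IsUltrametricDist.hasStrictNegativeType hp)
end

section
/- Let (Ω, μ) be a measure space and let B be a finitely supported two-valued set in M(Ω, μ). Then, for any p ∈ (0, ∞), the following are equivalent: (1) B has strict p-negative type when viewed as a metric subspace of L_p(Ω, μ); (2) B is an affinely independent subset of M(Ω, μ) when M(Ω, μ) is considered as a real vector space. -/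
/-! For `{0, 1}`-valued `f, g` the difference takes values in `{-1, 0, 1}`, where `|x| ^ p = x ^ 2`;
hence `‖f - g‖_p ^ p = ∫ (f - g) ^ 2` for every `p > 0`, and finite support puts `B` in `L²`.
Expanding the square, for weights `ζ` summing to zero
`∑ⱼ ∑ᵢ ‖zⱼ - zᵢ‖_p ^ p ζⱼ ζᵢ = -2 ∫ (∑ₖ ζₖ zₖ) ^ 2`,
which is always `≤ 0` and vanishes exactly when `∑ₖ ζₖ zₖ = 0` a.e. So the strict inequality fails
precisely at the nontrivial affine dependences of `B`. -/

open MeasureTheory ENNReal Filter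
open scoped Classical

lemma Fin.two_le_of_sum_eq_zero {M : Type*} [AddCommMonoid M] {n : ℕ} {w : Fin n → M}
    (hsum : ∑ i, w i = 0) (hw : w ≠ 0) : 2 ≤ n := by
  by_contra! hn
  interval_cases n
  · exact hw (Subsingleton.elim _ _)
  · exact hw (funext fun i => by rwa [Fin.fin_one_eq_zero i, ← Fin.sum_univ_one w])

theorem affineIndependent_subtype_iff_fin {k V : Type*} [Ring k] [AddCommGroup V] [Module k V]
    {s : Set V} :
    AffineIndependent k ((↑) : s → V) ↔
      ∀ n (z : Fin n → V), Function.Injective z → (∀ i, z i ∈ s) →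
        ∀ w : Fin n → k, ∑ i, w i = 0 → ∑ i, w i • z i = 0 → w = 0 := by
  constructor
  · intro hs n z hz hzs w hw₀ hw₁
    have hcomp := hs.comp_embedding
      ⟨fun i => ⟨z i, hzs i⟩, fun i j hij => hz (congrArg Subtype.val hij)⟩
    exact funext fun i => hcomp.eq_zero_of_sum_eq_zero hw₀ hw₁ i (Finset.mem_univ i)
  · intro h
    rw [affineIndependent_iff]
    intro t w hw₀ hw₁ x hx
    let e := t.equivFin.symm
    have hw₀' : ∑ i, w (e i) = 0 := by
      rwa [Equiv.sum_comp e (fun x => w x), Finset.sum_coe_sort]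
    have hw₁' : ∑ i, w (e i) • ((e i : s) : V) = 0 := by
      rwa [Equiv.sum_comp e (fun x => w x • (x : V)),
        Finset.sum_coe_sort t (fun x => w x • (x : V))]
    have hinj : Function.Injective fun i => ((e i : s) : V) :=
      Subtype.val_injective.comp (Subtype.val_injective.comp e.injective)
    simpa using congrFun (h _ _ hinj (fun i => (e i : s).2) _ hw₀' hw₁') (e.symm ⟨x, hx⟩)

lemma Finset.sum_sum_sq_sub_mul_mul {ι : Type*} (s : Finset ι) (a ζ : ι → ℝ)
    (hζ : ∑ i ∈ s, ζ i = 0) :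
    ∑ j ∈ s, ∑ i ∈ s, (a j - a i) ^ 2 * (ζ j * ζ i) = -2 * (∑ k ∈ s, ζ k * a k) ^ 2 := by
  have expand : ∀ j i, (a j - a i) ^ 2 * (ζ j * ζ i) =
      a j ^ 2 * ζ j * ζ i + ζ j * (a i ^ 2 * ζ i) - 2 * ((ζ j * a j) * (ζ i * a i)) :=
    fun j i => by ring
  simp only [expand, Finset.sum_add_distrib, Finset.sum_sub_distrib, ← Finset.mul_sum,
    ← Finset.sum_mul, hζ]
  rw [sq, Finset.sum_mul_sum]
  ring

namespace MeasureTheory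

variable {Ω : Type*} [MeasurableSpace Ω] {μ : Measure Ω}

lemma AEEqFun.coeFn_sum_smul {ι : Type*} (s : Finset ι) (c : ι → ℝ) (f : ι → Ω →ₘ[μ] ℝ) :
    ⇑(∑ k ∈ s, c k • f k) =ᵐ[μ] fun ω => ∑ k ∈ s, c k * f k ω := by
  induction s using Finset.induction_on with
  | empty => exact AEEqFun.coeFn_zero
  | insert a s ha ih =>
    filter_upwards [AEEqFun.coeFn_add (c a • f a) (∑ k ∈ s, c k • f k),
      AEEqFun.coeFn_smul (c a) (f a), ih] with ω hadd hsmul hsum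
    simp [Finset.sum_insert ha, hadd, hsmul, hsum]

lemma AEEqFun.integral_sq_pos_iff {F : Ω →ₘ[μ] ℝ} (hF : MemLp F 2 μ) :
    0 < ∫ ω, F ω ^ 2 ∂μ ↔ F ≠ 0 := by
  rw [integral_pos_iff_support_of_nonneg_ae (.of_forall fun ω => sq_nonneg _) hF.integrable_sq,
    Function.support_pow _ two_ne_zero, pos_iff_ne_zero, Ne, Ne, AEEqFun.ext_iff]
  exact not_congr <| (Measure.measure_support_eq_zero_iff μ).trans
    ⟨fun h => h.trans AEEqFun.coeFn_zero.symm, fun h => h.trans AEEqFun.coeFn_zero⟩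

lemma memLp_of_ae_mem_zero_one {f : Ω →ₘ[μ] ℝ} (hf : ∀ᵐ ω ∂μ, f ω ∈ ({0, 1} : Set ℝ))
    (hsupp : μ (Function.support f) < ∞) (q : ℝ≥0∞) : MemLp f q μ := by
  refine (memLp_indicator_const q (measurableSet_support f.stronglyMeasurable.measurable) 1
    (Or.inr hsupp.ne)).ae_eq ?_
  filter_upwards [hf] with ω hω
  rcases hω with h | h <;> simp_all

lemma lpDist_rpow_eq_integral_sq {p : ℝ} (hp : 0 < p) {f g : Ω →ₘ[μ] ℝ}
    (hf : ∀ᵐ ω ∂μ, f ω ∈ ({0, 1} : Set ℝ)) (hg : ∀ᵐ ω ∂μ, g ω ∈ ({0, 1} : Set ℝ)) :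
    lpDist p μ f g ^ p = ∫ ω, (f ω - g ω) ^ 2 ∂μ := by
  have hpow : ∫⁻ ω, ‖(f - g) ω‖ₑ ^ p ∂μ = ∫⁻ ω, ENNReal.ofReal ((f ω - g ω) ^ 2) ∂μ := by
    refine lintegral_congr_ae ?_
    filter_upwards [AEEqFun.coeFn_sub f g, hf, hg] with ω hsub hfω hgω
    rw [hsub, Pi.sub_apply]
    rcases hfω with h₁ | h₁ <;> rcases hgω with h₂ | h₂ <;>
      simp_all [ENNReal.zero_rpow_of_pos hp]
  rw [integral_eq_lintegral_of_nonneg_ae (f := fun ω => (f ω - g ω) ^ 2)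
      (.of_forall fun ω => sq_nonneg _)
      ((f.aestronglyMeasurable.sub g.aestronglyMeasurable).pow 2), ← hpow, lpDist,
    eLpNorm_eq_lintegral_rpow_enorm_toReal (by simpa using hp) ENNReal.ofReal_ne_top,
    ENNReal.toReal_ofReal hp.le, ENNReal.toReal_rpow, ← ENNReal.rpow_mul,
    one_div_mul_cancel hp.ne', ENNReal.rpow_one]

section QuadraticForm

variable {ι : Type*} [Fintype ι] {p : ℝ} {z : ι → Ω →ₘ[μ] ℝ} {ζ : ι → ℝ}

lemma memLp_sum_smul {q : ℝ≥0∞} (hz : ∀ k, MemLp (z k) q μ) :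
    MemLp ⇑(∑ k, ζ k • z k) q μ :=
  (memLp_finsetSum _ fun k _ => (hz k).const_mul (ζ k)).ae_eq
    (AEEqFun.coeFn_sum_smul _ ζ z).symm

lemma sum_sum_lpDist_rpow_mul_eq (hp : 0 < p) (hz : ∀ k, ∀ᵐ ω ∂μ, z k ω ∈ ({0, 1} : Set ℝ))
    (hsupp : ∀ k, μ (Function.support (z k)) < ∞) (hζ : ∑ k, ζ k = 0) :
    ∑ j, ∑ i, lpDist p μ (z j) (z i) ^ p * (ζ j * ζ i) =
      -2 * ∫ ω, (∑ k, ζ k • z k) ω ^ 2 ∂μ := by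
  have hL2 : ∀ k, MemLp (z k) 2 μ := fun k => memLp_of_ae_mem_zero_one (hz k) (hsupp k) 2
  have hint : ∀ j i, Integrable (fun ω => (z j ω - z i ω) ^ 2 * (ζ j * ζ i)) μ :=
    fun j i => ((hL2 j).sub (hL2 i)).integrable_sq.mul_const _
  calc ∑ j, ∑ i, lpDist p μ (z j) (z i) ^ p * (ζ j * ζ i)
      = ∫ ω, ∑ j, ∑ i, (z j ω - z i ω) ^ 2 * (ζ j * ζ i) ∂μ := by
        rw [integral_finsetSum _ fun j _ => integrable_finsetSum _ fun i _ => hint j i]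
        refine Finset.sum_congr rfl fun j _ => ?_
        rw [integral_finsetSum _ fun i _ => hint j i]
        refine Finset.sum_congr rfl fun i _ => ?_
        rw [integral_mul_const, lpDist_rpow_eq_integral_sq hp (hz j) (hz i)]
    _ = ∫ ω, -2 * (∑ k, ζ k • z k) ω ^ 2 ∂μ := by
        refine integral_congr_ae ?_
        filter_upwards [AEEqFun.coeFn_sum_smul Finset.univ ζ z] with ω hω
        rw [hω, Finset.sum_sum_sq_sub_mul_mul _ _ _ hζ]
    _ = -2 * ∫ ω, (∑ k, ζ k • z k) ω ^ 2 ∂μ := integral_const_mul _ _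

lemma sum_sum_lpDist_rpow_mul_nonpos (hp : 0 < p) (hz : ∀ k, ∀ᵐ ω ∂μ, z k ω ∈ ({0, 1} : Set ℝ))
    (hsupp : ∀ k, μ (Function.support (z k)) < ∞) (hζ : ∑ k, ζ k = 0) :
    ∑ j, ∑ i, lpDist p μ (z j) (z i) ^ p * (ζ j * ζ i) ≤ 0 := by
  rw [sum_sum_lpDist_rpow_mul_eq hp hz hsupp hζ]
  have : 0 ≤ ∫ ω, (∑ k, ζ k • z k) ω ^ 2 ∂μ := integral_nonneg fun ω => sq_nonneg _
  linarith

lemma sum_sum_lpDist_rpow_mul_neg_iff (hp : 0 < p) (hz : ∀ k, ∀ᵐ ω ∂μ, z k ω ∈ ({0, 1} : Set ℝ))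
    (hsupp : ∀ k, μ (Function.support (z k)) < ∞) (hζ : ∑ k, ζ k = 0) :
    ∑ j, ∑ i, lpDist p μ (z j) (z i) ^ p * (ζ j * ζ i) < 0 ↔ ∑ k, ζ k • z k ≠ 0 := by
  rw [sum_sum_lpDist_rpow_mul_eq hp hz hsupp hζ, ← AEEqFun.integral_sq_pos_iff
    (memLp_sum_smul fun k => memLp_of_ae_mem_zero_one (hz k) (hsupp k) 2)]
  constructor <;> intro h <;> linarith

end QuadraticForm

end MeasureTheory

/-- Let `B` be a finitely supported two-valued set of (classes of)
measurable functions on `(Ω, μ)`. For any `p ∈ (0, ∞)`, `B` has strict `p`-negative type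
as a metric subspace of `L_p(Ω, μ)` iff `B` is affinely independent in the real vector
space of (classes of) measurable functions. -/
theorem twoValued_strictNegativeType_iff_affineIndependent_M {Ω : Type*} [MeasurableSpace Ω]
    (μ : Measure Ω) (B : Set (Ω →ₘ[μ] ℝ)) (hB : TwoValued B)
    (hsupp : ∀ f ∈ B, μ (Function.support ⇑f) < ∞) (p : ℝ) (hp : 0 < p) :
    HasStrictNegativeType (lpDist p μ) p B ↔
      AffineIndependent ℝ ((↑) : B → (Ω →ₘ[μ] ℝ)) := by
  obtain ⟨-, h01⟩ := hB
  rw [affineIndependent_subtype_iff_fin]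
  constructor
  · rintro ⟨-, hstrict⟩ n z hz hzB ζ hζ hcomb
    by_contra hζne
    have hneg := hstrict n (Fin.two_le_of_sum_eq_zero hζ hζne) z hz hzB ζ hζ hζne
    exact (sum_sum_lpDist_rpow_mul_neg_iff hp (fun k => h01 _ (hzB k))
      (fun k => hsupp _ (hzB k)) hζ).1 hneg hcomb
  · intro hindep
    refine ⟨fun n _ z _ hzB ζ hζ => ?_, fun n _ z hz hzB ζ hζ hζne => ?_⟩
    · exact sum_sum_lpDist_rpow_mul_nonpos hp (fun k => h01 _ (hzB k))
        (fun k => hsupp _ (hzB k)) hζ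
    · exact (sum_sum_lpDist_rpow_mul_neg_iff hp (fun k => h01 _ (hzB k))
        (fun k => hsupp _ (hzB k)) hζ).2 fun hcomb => hζne (hindep n z hz hzB ζ hζ hcomb)
end

section
/- Let p ∈ (0, ∞), let β ≠ 0 be a scalar, and let (Ω, μ) be a measure space. If D = [x_j(m_j); y_i(n_i)]_{s,t} is a signed simplex in L_p(Ω, μ) such that the essential range of each of the functions x_j, y_i is a subset of {0, β}, then γ_p(D) = |β|^{p−2} · ‖Σ_j m_j x_j − Σ_i n_i y_i‖_2², where ‖·‖_2 denotes the L_2(Ω, μ)-norm. In particular, γ_p(D) = 0 if and only if D is balanced. -/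
open MeasureTheory ENNReal Filter
open scoped Classical

/-! If `f` and `g` take values in `{0, β}`, then `|f - g|` takes values in `{0, |β|}`, so
`|f - g|^p = |β|^(p-2) |f - g|^2` pointwise and `d_p(f, g)^p = |β|^(p-2) ‖f - g‖₂²`. Hence the
`p`-simplex gap of `D` in `L_p` is `|β|^(p-2)` times the `2`-simplex gap of `D` regarded in the
Hilbert space `L₂`, and for weights with `∑ m_j = ∑ n_i` the latter expands, through
`‖u - v‖² = ‖u‖² - 2⟪u, v⟫ + ‖v‖²`, to `‖∑ m_j x_j - ∑ n_i y_i‖²`. -/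

open scoped NNReal

theorem sum_sum_ite_lt_eq_half {ι : Type*} [Fintype ι] [LinearOrder ι] (F : ι → ι → ℝ)
    (hsymm : ∀ i j, F i j = F j i) (hdiag : ∀ i, F i i = 0) :
    ∑ i, ∑ j, (if i < j then F i j else 0) = (∑ i, ∑ j, F i j) / 2 := by
  have hsplit : ∀ i j, F i j = (if i < j then F i j else 0) + (if j < i then F j i else 0) := by
    intro i j
    rcases lt_trichotomy i j with h | rfl | h
    · simp [h, h.not_gt]
    · simp [hdiag]
    · simp [h, h.not_gt, hsymm i j]
  have hswap : ∑ i, ∑ j, (if j < i then F j i else 0) = ∑ i, ∑ j, (if i < j then F i j else 0) :=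
    Finset.sum_comm
  rw [Finset.sum_congr rfl fun i _ => Finset.sum_congr rfl fun j _ => hsplit i j]
  simp only [Finset.sum_add_distrib, hswap]
  ring

theorem sum_sum_mul_norm_sub_sq {E : Type*} [NormedAddCommGroup E]
    [InnerProductSpace ℝ E] {ι κ : Type*} [Fintype ι] [Fintype κ] (m : ι → ℝ) (n : κ → ℝ)
    (x : ι → E) (y : κ → E) :
    ∑ j, ∑ i, m j * n i * ‖x j - y i‖ ^ 2 =
      (∑ j, m j * ‖x j‖ ^ 2) * ∑ i, n i - 2 * inner ℝ (∑ j, m j • x j) (∑ i, n i • y i)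
        + (∑ j, m j) * ∑ i, n i * ‖y i‖ ^ 2 := by
  have hinner : inner ℝ (∑ j, m j • x j) (∑ i, n i • y i)
      = ∑ j, ∑ i, m j * n i * inner ℝ (x j) (y i) := by
    simp only [sum_inner (𝕜 := ℝ), inner_sum (𝕜 := ℝ), real_inner_smul_left,
      real_inner_smul_right, mul_left_comm, mul_assoc]
  rw [hinner, Finset.sum_mul_sum, Finset.sum_mul_sum, Finset.mul_sum, ← Finset.sum_sub_distrib,
    ← Finset.sum_add_distrib]
  refine Finset.sum_congr rfl fun j _ => ?_
  rw [Finset.mul_sum, ← Finset.sum_sub_distrib, ← Finset.sum_add_distrib]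
  refine Finset.sum_congr rfl fun i _ => ?_
  rw [norm_sub_sq_real]
  ring

theorem simplexGap_dist_two_eq_norm_sq {E : Type*} [NormedAddCommGroup E]
    [InnerProductSpace ℝ E] {s t : ℕ} (x : Fin s → E) (y : Fin t → E) (m : Fin s → ℝ)
    (n : Fin t → ℝ) (hmn : ∑ j, m j = ∑ i, n i) :
    simplexGap dist 2 x y m n = ‖∑ j, m j • x j - ∑ i, n i • y i‖ ^ 2 := by
  have hx := sum_sum_ite_lt_eq_half (fun j₁ j₂ => m j₁ * m j₂ * ‖x j₁ - x j₂‖ ^ 2)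
    (fun _ _ => by rw [norm_sub_rev]; ring) (fun _ => by simp)
  have hy := sum_sum_ite_lt_eq_half (fun i₁ i₂ => n i₁ * n i₂ * ‖y i₁ - y i₂‖ ^ 2)
    (fun _ _ => by rw [norm_sub_rev]; ring) (fun _ => by simp)
  simp only [simplexGap, dist_eq_norm, Real.rpow_two] at hx hy ⊢
  rw [hx, hy, sum_sum_mul_norm_sub_sq, sum_sum_mul_norm_sub_sq, sum_sum_mul_norm_sub_sq,
    norm_sub_sq_real, hmn, real_inner_self_eq_norm_sq, real_inner_self_eq_norm_sq]
  ring

theorem simplexGap_comp_eq_mul {X Y : Type*} {d : X → X → ℝ} {d' : Y → Y → ℝ} {φ : Y → X}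
    {S : Set Y} {p q c : ℝ} (hd : ∀ u ∈ S, ∀ v ∈ S, d (φ u) (φ v) ^ p = c * d' u v ^ q)
    {s t : ℕ} {x : Fin s → Y} {y : Fin t → Y} (hx : ∀ j, x j ∈ S) (hy : ∀ i, y i ∈ S)
    (m : Fin s → ℝ) (n : Fin t → ℝ) :
    simplexGap d p (φ ∘ x) (φ ∘ y) m n = c * simplexGap d' q x y m n := by
  simp only [simplexGap, Function.comp_apply, mul_sub, Finset.mul_sum, mul_ite, mul_zero]
  congr 1
  congr 1
  all_goals refine Finset.sum_congr rfl fun a _ => Finset.sum_congr rfl fun b _ => ?_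
  · rw [hd _ (hx a) _ (hy b)]; ring
  · split_ifs
    · rw [hd _ (hx a) _ (hx b)]; ring
    · rfl
  · split_ifs
    · rw [hd _ (hy a) _ (hy b)]; ring
    · rfl

theorem NNReal.rpow_eq_rpow_sub_mul_rpow {a b : ℝ≥0} {q r : ℝ} (hq : q ≠ 0) (hr : r ≠ 0)
    (ha : a = 0 ∨ a = b) : a ^ q = b ^ (q - r) * a ^ r := by
  rcases ha with rfl | rfl
  · simp [NNReal.zero_rpow hq, NNReal.zero_rpow hr]
  · rw [← NNReal.rpow_add' (by simpa using hq), sub_add_cancel]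

section

variable {Ω E : Type*} [MeasurableSpace Ω] {μ : Measure Ω} [NormedAddCommGroup E]
  {h : Ω → E} {b : ℝ≥0} {q r : ℝ}

theorem lintegral_enorm_rpow_eq_mul (hq : 0 < q) (hr : 0 < r)
    (hh : ∀ᵐ ω ∂μ, ‖h ω‖₊ = 0 ∨ ‖h ω‖₊ = b) :
    ∫⁻ ω, ‖h ω‖ₑ ^ q ∂μ = ↑(b ^ (q - r)) * ∫⁻ ω, ‖h ω‖ₑ ^ r ∂μ := by
  rw [← lintegral_const_mul' _ _ ENNReal.coe_ne_top]
  refine lintegral_congr_ae ?_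
  filter_upwards [hh] with ω hω
  rw [enorm_eq_nnnorm, ← ENNReal.coe_rpow_of_nonneg _ hq.le,
    ← ENNReal.coe_rpow_of_nonneg _ hr.le, ← ENNReal.coe_mul,
    NNReal.rpow_eq_rpow_sub_mul_rpow hq.ne' hr.ne' hω]

theorem eLpNorm_ofReal_rpow (hq : 0 < q) (f : Ω → E) :
    eLpNorm f (ENNReal.ofReal q) μ ^ q = ∫⁻ ω, ‖f ω‖ₑ ^ q ∂μ := by
  have := eLpNorm_nnreal_pow_eq_lintegral (f := f) (μ := μ) (Real.toNNReal_pos.mpr hq).ne'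
  rwa [Real.coe_toNNReal _ hq.le] at this

theorem eLpNorm_rpow_eq_mul_eLpNorm_rpow (hq : 0 < q) (hr : 0 < r)
    (hh : ∀ᵐ ω ∂μ, ‖h ω‖₊ = 0 ∨ ‖h ω‖₊ = b) :
    eLpNorm h (ENNReal.ofReal q) μ ^ q = ↑(b ^ (q - r)) * eLpNorm h (ENNReal.ofReal r) μ ^ r := by
  rw [eLpNorm_ofReal_rpow hq, eLpNorm_ofReal_rpow hr, lintegral_enorm_rpow_eq_mul hq hr hh]

theorem MeasureTheory.MemLp.of_nnnorm_eq_zero_or_eq (hq : 0 < q) (hr : 0 < r)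
    (hh : ∀ᵐ ω ∂μ, ‖h ω‖₊ = 0 ∨ ‖h ω‖₊ = b) (hLp : MemLp h (ENNReal.ofReal r) μ) :
    MemLp h (ENNReal.ofReal q) μ := by
  refine ⟨hLp.1, ?_⟩
  rw [← ENNReal.rpow_lt_top_iff_of_pos hq, eLpNorm_rpow_eq_mul_eLpNorm_rpow hq hr hh]
  exact ENNReal.mul_lt_top ENNReal.coe_lt_top (ENNReal.rpow_lt_top_of_nonneg hr.le hLp.2.ne)

theorem toReal_eLpNorm_rpow_eq_mul (hq : 0 < q) (hr : 0 < r)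
    (hh : ∀ᵐ ω ∂μ, ‖h ω‖₊ = 0 ∨ ‖h ω‖₊ = b) :
    (eLpNorm h (ENNReal.ofReal q) μ).toReal ^ q
      = (b : ℝ) ^ (q - r) * (eLpNorm h (ENNReal.ofReal r) μ).toReal ^ r := by
  rw [ENNReal.toReal_rpow, ENNReal.toReal_rpow, eLpNorm_rpow_eq_mul_eLpNorm_rpow hq hr hh,
    ENNReal.toReal_mul, ENNReal.coe_toReal, NNReal.coe_rpow]

end

theorem nnnorm_sub_eq_zero_or_eq_of_mem_pair {a c β : ℝ} (ha : a ∈ ({0, β} : Set ℝ))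
    (hc : c ∈ ({0, β} : Set ℝ)) : ‖a - c‖₊ = 0 ∨ ‖a - c‖₊ = ‖β‖₊ := by
  rcases ha with rfl | rfl <;> rcases hc with rfl | rfl <;> simp

section

variable {Ω : Type*} [MeasurableSpace Ω] {μ : Measure Ω} {p β : ℝ}

theorem lpDist_rpow_eq_mul_dist_sq (hp : 0 < p) {u v : Lp ℝ 2 μ}
    (hu : ∀ᵐ ω ∂μ, u ω ∈ ({0, β} : Set ℝ)) (hv : ∀ᵐ ω ∂μ, v ω ∈ ({0, β} : Set ℝ)) :
    lpDist p μ u v ^ p = |β| ^ (p - 2) * dist u v ^ (2 : ℝ) := by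
  have huv : ∀ᵐ ω ∂μ, ‖(u - v : Ω →ₘ[μ] ℝ) ω‖₊ = 0 ∨ ‖(u - v : Ω →ₘ[μ] ℝ) ω‖₊ = ‖β‖₊ := by
    filter_upwards [hu, hv, AEEqFun.coeFn_sub (u : Ω →ₘ[μ] ℝ) v] with ω huω hvω hsub
    rw [hsub, Pi.sub_apply]
    exact nnnorm_sub_eq_zero_or_eq_of_mem_pair huω hvω
  rw [lpDist, toReal_eLpNorm_rpow_eq_mul hp two_pos huv, coe_nnnorm, Real.norm_eq_abs,
    ENNReal.ofReal_ofNat, dist_eq_norm, Lp.norm_def]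
  rfl

theorem mem_Lp_two_of_ae_mem_pair (hp : 0 < p) {f : Ω →ₘ[μ] ℝ}
    (hLp : MemLp f (ENNReal.ofReal p) μ) (hf : ∀ᵐ ω ∂μ, f ω ∈ ({0, β} : Set ℝ)) :
    f ∈ Lp ℝ 2 μ := by
  have hf' : ∀ᵐ ω ∂μ, ‖f ω‖₊ = 0 ∨ ‖f ω‖₊ = ‖β‖₊ := by
    filter_upwards [hf] with ω hfω
    simpa using nnnorm_sub_eq_zero_or_eq_of_mem_pair hfω (Set.mem_insert 0 _)
  rw [Lp.mem_Lp_iff_memLp, ← ENNReal.ofReal_ofNat]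
  exact hLp.of_nnnorm_eq_zero_or_eq two_pos hp hf'

end

theorem twoValued_simplexGap_Lp_scaled_general {Ω : Type*} [MeasurableSpace Ω] (μ : Measure Ω)
    (p : ℝ) (hp : 0 < p) (β : ℝ) (hβ : β ≠ 0) (s t : ℕ)
    (x : Fin s → (Ω →ₘ[μ] ℝ)) (y : Fin t → (Ω →ₘ[μ] ℝ))
    (m : Fin s → ℝ) (n : Fin t → ℝ) (hbal : ∑ j, m j = ∑ i, n i)
    (hxLp : ∀ j, MemLp (⇑(x j)) (ENNReal.ofReal p) μ)
    (hyLp : ∀ i, MemLp (⇑(y i)) (ENNReal.ofReal p) μ)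
    (hx : ∀ j, ∀ᵐ ω ∂μ, (x j : Ω → ℝ) ω ∈ ({0, β} : Set ℝ))
    (hy : ∀ i, ∀ᵐ ω ∂μ, (y i : Ω → ℝ) ω ∈ ({0, β} : Set ℝ)) :
    simplexGap (lpDist p μ) p x y m n =
      |β| ^ (p - 2) * (eLpNorm (⇑((∑ j, m j • x j) - ∑ i, n i • y i)) 2 μ).toReal ^ 2 ∧
    (simplexGap (lpDist p μ) p x y m n = 0 ↔ (∑ j, m j • x j) = ∑ i, n i • y i) := by
  let X : Fin s → Lp ℝ 2 μ := fun j => ⟨x j, mem_Lp_two_of_ae_mem_pair hp (hxLp j) (hx j)⟩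
  let Y : Fin t → Lp ℝ 2 μ := fun i => ⟨y i, mem_Lp_two_of_ae_mem_pair hp (hyLp i) (hy i)⟩
  have hcoe : ((∑ j, m j • X j - ∑ i, n i • Y i : Lp ℝ 2 μ) : Ω →ₘ[μ] ℝ)
      = ∑ j, m j • x j - ∑ i, n i • y i := by
    simp only [AddSubgroup.coe_sub, AddSubmonoidClass.coe_finsetSum]
    rfl
  have hgap : simplexGap (lpDist p μ) p x y m n
      = |β| ^ (p - 2) * ‖∑ j, m j • X j - ∑ i, n i • Y i‖ ^ 2 := by
    rw [← simplexGap_dist_two_eq_norm_sq X Y m n hbal]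
    exact simplexGap_comp_eq_mul (x := X) (y := Y)
      (S := {u : Lp ℝ 2 μ | ∀ᵐ ω ∂μ, u ω ∈ ({0, β} : Set ℝ)})
      (fun _ hu _ hv => lpDist_rpow_eq_mul_dist_sq hp hu hv) hx hy m n
  have hnorm : (eLpNorm ⇑(∑ j, m j • x j - ∑ i, n i • y i) 2 μ).toReal
      = ‖∑ j, m j • X j - ∑ i, n i • Y i‖ := by
    rw [Lp.norm_def, hcoe]
  rw [hnorm, hgap]
  refine ⟨rfl, ?_⟩
  rw [mul_eq_zero, or_iff_right (Real.rpow_pos_of_pos (abs_pos.mpr hβ) _).ne', pow_eq_zero_iff two_ne_zero,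
    norm_eq_zero, ← ZeroMemClass.coe_eq_zero, hcoe, sub_eq_zero]

/-- If `β ≠ 0` and `D = [x_j(m_j); y_i(n_i)]_{s,t}` is a signed simplex
in `L_p(Ω, μ)` whose vertices all have essential range contained in `{0, β}`, then
`γ_p(D) = |β|^{p−2} ⬝ ‖∑_j m_j x_j − ∑_i n_i y_i‖₂²`; in particular `γ_p(D) = 0` iff `D`
is balanced. -/
theorem twoValued_simplexGap_Lp_scaled {Ω : Type*} [MeasurableSpace Ω] (μ : Measure Ω)
    (p : ℝ) (hp : 0 < p) (β : ℝ) (hβ : β ≠ 0) (s t : ℕ) (hs : 0 < s) (ht : 0 < t)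
    (x : Fin s → (Ω →ₘ[μ] ℝ)) (y : Fin t → (Ω →ₘ[μ] ℝ))
    (m : Fin s → ℝ) (n : Fin t → ℝ) (hbal : ∑ j, m j = ∑ i, n i)
    (hxLp : ∀ j, MemLp (⇑(x j)) (ENNReal.ofReal p) μ)
    (hyLp : ∀ i, MemLp (⇑(y i)) (ENNReal.ofReal p) μ)
    (hx : ∀ j, ∀ᵐ ω ∂μ, (x j : Ω → ℝ) ω ∈ ({0, β} : Set ℝ))
    (hy : ∀ i, ∀ᵐ ω ∂μ, (y i : Ω → ℝ) ω ∈ ({0, β} : Set ℝ)) :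
    simplexGap (lpDist p μ) p x y m n =
      |β| ^ (p - 2) * (eLpNorm (⇑((∑ j, m j • x j) - ∑ i, n i • y i)) 2 μ).toReal ^ 2 ∧
    (simplexGap (lpDist p μ) p x y m n = 0 ↔ (∑ j, m j • x j) = ∑ i, n i • y i) :=
  twoValued_simplexGap_Lp_scaled_general μ p hp β hβ s t x y m n hbal hxLp hyLp hx hy
end
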